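/- There exists a constant C > 0 such that f(θ,t,h|h') ≤ C/(t+1) for all (θ,t,h,h') ∈ T¹_{2π} × [0,∞) × [-1,1]². -/

import Mathlib

open MeasureTheory Real Set

/-- Core formula of the 2D Lorentz gas transition kernel, valid for `|h'| ≤ h`. -/
noncomputable def Qcore (s h h' : ℝ) : ℝ :=
  if 0 ≤ s ∧ s ≤ 1 / (1 + h) then 6 / Real.pi ^ 2
  else if 1 / (1 + h) < s ∧ s ≤ 1 / (1 + h') then
    (6 / Real.pi ^ 2) * ((1 / s - (1 + h')) / (h - h'))
  else 0

/-- The 2D Lorentz gas transition kernel `Q(s, h | h')`, extended to all `h, h' ∈ [-1,1]`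
by the symmetries `Q(s,h|h') = Q(s,h'|h) = Q(s,-h|-h')`. -/
noncomputable def Qker (s h h' : ℝ) : ℝ :=
  if |h'| ≤ h then Qcore s h h'
  else if |h| ≤ h' then Qcore s h' h
  else if |h'| ≤ -h then Qcore s (-h) (-h')
  else Qcore s (-h') (-h)

/-- Iterated kernels: `Qn 1 = Qker`, and
`Qn (n+1) (s,h|h') = ∫₀ˢ ∫₋₁¹ Q(s-s',h|h'') Qn n (s',h''|h') dh'' ds'`. -/
noncomputable def Qn : ℕ → ℝ → ℝ → ℝ → ℝ
  | 0, _, _, _ => 0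
  | 1, s, h, h' => Qker s h h'
  | n + 2, s, h, h' =>
      ∫ s' in Set.Ioc (0:ℝ) s, ∫ h'' in Set.Icc (-1:ℝ) 1,
        Qker (s - s') h h'' * Qn (n + 1) s' h'' h'

/-- `E⁽ⁿ⁾(s,h) = ∫ₛ^∞ ∫₋₁¹ Q⁽ⁿ⁾(s',h|h') dh' ds'`. -/
noncomputable def En (n : ℕ) (s h : ℝ) : ℝ :=
  ∫ s' in Set.Ioi s, ∫ h' in Set.Icc (-1:ℝ) 1, Qn n s' h h'

/-- `E = E⁽¹⁾`. -/
noncomputable def Eker (s h : ℝ) : ℝ := En 1 s h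

/-- Transition probability `Π(h|h') = ∫₀^∞ Q(s,h|h') ds`. -/
noncomputable def Pker (h h' : ℝ) : ℝ := ∫ s in Set.Ioi (0:ℝ), Qker s h h'

/-- `h''(θ,h')` as in Definition of `h''`. -/
noncomputable def hdd (θ h' : ℝ) : ℝ :=
  if 2 * Real.arcsin h' - 3 * Real.pi ≤ θ ∧ θ < 2 * Real.arcsin h' - Real.pi then
    Real.sin ((θ + 2 * Real.pi - 2 * Real.arcsin h') / 2)
  else 0

/-- `∂h''/∂θ (θ, h')`. -/
noncomputable def dhdd (θ h' : ℝ) : ℝ :=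
  if 2 * Real.arcsin h' - 3 * Real.pi ≤ θ ∧ θ < 2 * Real.arcsin h' - Real.pi then
    Real.cos ((θ + 2 * Real.pi - 2 * Real.arcsin h') / 2) / 2
  else 0

/-- The function `f(θ,t,h|h')`. -/
noncomputable def fker (θ t h h' : ℝ) : ℝ :=
  ∑' ℓ : ℤ, dhdd (θ + 2 * (ℓ : ℝ) * Real.pi) h' *
    ∫ t' in Set.Ioc (0:ℝ) t,
      Qker (t - t') h (hdd (θ + 2 * (ℓ : ℝ) * Real.pi) h') *
      Qker t' (hdd (θ + 2 * (ℓ : ℝ) * Real.pi) h') h'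

/-- Dot product `k · v(θ)` with `v(θ) = (cos θ, sin θ)`. -/
noncomputable def dotv (k : ℝ × ℝ) (θ : ℝ) : ℝ := k.1 * Real.cos θ + k.2 * Real.sin θ

/-- The complex-valued function `g^k(θ,t,h|θ',h')`. -/
noncomputable def gk (k : ℝ × ℝ) (θ t h θ' h' : ℝ) : ℂ :=
  ∑' ℓ : ℤ,
    ((dhdd (θ - θ' + 2 * (ℓ : ℝ) * Real.pi) h' : ℝ) : ℂ) *
    Complex.exp (2 * Real.pi * t * dotv k θ * Complex.I) *
    ∫ t' in Set.Ioc (0:ℝ) t,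
      ((Qker (t - t') h (hdd (θ - θ' + 2 * (ℓ : ℝ) * Real.pi) h') *
        Qker t' (hdd (θ - θ' + 2 * (ℓ : ℝ) * Real.pi) h') h' : ℝ) : ℂ) *
      Complex.exp (2 * Real.pi * t' *
        (dotv k (θ' - Real.pi + 2 * Real.arcsin h') - dotv k θ) * Complex.I)
lemma pi_sq_gt : (9:ℝ) < Real.pi ^ 2 := by nlinarith [Real.pi_gt_three]
lemma pi_sq_pos : (0:ℝ) < Real.pi ^ 2 := by positivity
lemma mid_facts {s a b : ℝ} (hba : |b| ≤ a)
    (h2 : 1 / (1 + a) < s ∧ s ≤ 1 / (1 + b)) :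
    0 < s ∧ 0 < 1 + b ∧ 1 + b ≤ 1 / s ∧ 1 / s < 1 + a ∧ b < a := by
  have h0b : 0 ≤ a := le_trans (abs_nonneg b) hba
  have hua : (0:ℝ) < 1 + a := by linarith
  have hsa : (0:ℝ) < 1 / (1 + a) := by positivity
  have hs0 : 0 < s := lt_trans hsa h2.1
  have hb1 : (0:ℝ) < 1 + b := by
    by_contra hc
    push_neg at hc
    rcases eq_or_lt_of_le hc with h | h
    · have h22 := h2.2
      rw [h] at h22
      simp at h22
      linarith
    · have : 1 / (1 + b) < 0 := div_neg_of_pos_of_neg one_pos h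
      linarith [h2.2, lt_trans hsa h2.1]
  have h3 : 1 + b ≤ 1 / s := by
    rw [le_div_iff₀ hs0]
    have := (le_div_iff₀ hb1).mp h2.2
    linarith [this]
  have h4 : 1 / s < 1 + a := by
    rw [div_lt_iff₀ hs0]
    have := (div_lt_iff₀ hua).mp h2.1
    linarith [this]
  exact ⟨hs0, hb1, h3, h4, by linarith⟩
lemma Qcore_nonneg {s a b : ℝ} (hba : |b| ≤ a) : 0 ≤ Qcore s a b := by
  unfold Qcore
  split_ifs with h1 h2
  · positivity
  · obtain ⟨hs0, hb1, h3, h4, hab⟩ := mid_facts hba h2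
    have : (0:ℝ) ≤ (1 / s - (1 + b)) / (a - b) :=
      div_nonneg (by linarith) (by linarith)
    positivity
  · exact le_rfl
lemma Qcore_le {s a b : ℝ} (hba : |b| ≤ a) : Qcore s a b ≤ 6 / Real.pi ^ 2 := by
  unfold Qcore
  split_ifs with h1 h2
  · exact le_rfl
  · obtain ⟨hs0, hb1, h3, h4, hab⟩ := mid_facts hba h2
    have hr : (1 / s - (1 + b)) / (a - b) ≤ 1 := by
      rw [div_le_one (by linarith)]
      linarith
    calc 6 / Real.pi ^ 2 * ((1 / s - (1 + b)) / (a - b)) ≤ 6 / Real.pi ^ 2 * 1 :=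
          mul_le_mul_of_nonneg_left hr (by positivity)
      _ = 6 / Real.pi ^ 2 := mul_one _
  · positivity
lemma Qcore_decay {s a b : ℝ} (hba : |b| ≤ a) (ha : a ≤ 1) (hs : 0 ≤ s) :
    Qcore s a b ≤ (18 / Real.pi ^ 2) / (s + 1) := by
  have h0b : 0 ≤ a := le_trans (abs_nonneg b) hba
  have hc : (0:ℝ) < 6 / Real.pi ^ 2 := by positivity
  rcases le_or_gt s 2 with hs2 | hs2
  · calc Qcore s a b ≤ 6 / Real.pi ^ 2 := Qcore_le hba
      _ ≤ (18 / Real.pi ^ 2) / (s + 1) := by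
        have h18 : (18:ℝ) / Real.pi ^ 2 / (s + 1) = 6 / Real.pi ^ 2 * (3 / (s + 1)) := by
          ring
        rw [h18]
        nth_rewrite 1 [← mul_one (6 / Real.pi ^ 2)]
        apply mul_le_mul_of_nonneg_left _ hc.le
        rw [le_div_iff₀ (by linarith : (0:ℝ) < s + 1)]
        linarith
  · unfold Qcore
    split_ifs with h1 h2
    · exfalso
      have : 1 / (1 + a) ≤ 1 := by
        rw [div_le_one (by linarith)]; linarith
      linarith [h1.2]
    · obtain ⟨hs0, hb1, h3, h4, hab⟩ := mid_facts hba h2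
      have hnegb : -b ≤ a := by
        have := (abs_le.mp hba).1; linarith
      have hnb : -b ≥ 1 - 1/s := by linarith
      have hab2 : a - b ≥ 2 * (1 - 1/s) := by linarith
      have hrs : 1/s < 1/2 := by
        rw [div_lt_div_iff₀ hs0 two_pos]; linarith
      have hden : (1:ℝ) ≤ a - b := by linarith
      have hratio : (1 / s - (1 + b)) / (a - b) ≤ (1/s) / (2 * (1 - 1/s)) := by
        apply div_le_div₀ (by positivity) (by linarith) (by linarith) hab2
      have heq : (1/s) / (2 * (1 - 1/s)) = 1 / (2 * (s - 1)) := by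
        rw [div_eq_div_iff (by nlinarith) (by nlinarith)]
        field_simp
      rw [heq] at hratio
      calc 6 / Real.pi ^ 2 * ((1 / s - (1 + b)) / (a - b))
          ≤ 6 / Real.pi ^ 2 * (1 / (2 * (s - 1))) :=
            mul_le_mul_of_nonneg_left hratio (by positivity)
        _ ≤ (18 / Real.pi ^ 2) / (s + 1) := by
            have h18 : (18:ℝ) / Real.pi ^ 2 / (s + 1) = 6 / Real.pi ^ 2 * (3 / (s + 1)) := by
              ring
            rw [h18]
            apply mul_le_mul_of_nonneg_left _ hc.le
            rw [div_le_div_iff₀ (by nlinarith : (0:ℝ) < 2 * (s - 1))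
              (by linarith : (0:ℝ) < s + 1)]
            linarith
    · positivity
lemma Qcore_measurable (a b : ℝ) : Measurable fun s => Qcore s a b := by
  unfold Qcore
  apply Measurable.ite
  · have h : {s : ℝ | 0 ≤ s ∧ s ≤ 1 / (1 + a)} = Icc 0 (1 / (1 + a)) := rfl
    rw [h]; exact measurableSet_Icc
  · exact measurable_const
  apply Measurable.ite
  · have h : {s : ℝ | 1 / (1 + a) < s ∧ s ≤ 1 / (1 + b)} = Ioc (1 / (1 + a)) (1 / (1 + b)) := rfl
    rw [h]; exact measurableSet_Ioc
  · exact (((measurable_const.div measurable_id).sub measurable_const).div_const _).const_mul _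
  · exact measurable_const
lemma Qker_repr (h h' : ℝ) (hh : |h| ≤ 1) (hh' : |h'| ≤ 1) :
    ∃ a b : ℝ, (∀ s, Qker s h h' = Qcore s a b) ∧ |b| ≤ a ∧ a ≤ 1 ∧
      1 - |h| ≤ 1 + b ∧ 1 - |h'| ≤ 1 + b := by
  unfold Qker
  split_ifs with h1 h2 h3
  · refine ⟨h, h', fun s => rfl, h1, ?_, ?_, ?_⟩
    · linarith [le_abs_self h]
    · linarith [le_abs_self h, neg_abs_le h']
    · linarith [neg_abs_le h']
  · refine ⟨h', h, fun s => rfl, h2, ?_, ?_, ?_⟩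
    · linarith [le_abs_self h']
    · linarith [neg_abs_le h]
    · linarith [le_abs_self h', neg_abs_le h]
  · refine ⟨-h, -h', fun s => rfl, by rwa [abs_neg], ?_, ?_, ?_⟩
    · linarith [neg_abs_le h]
    · linarith [le_abs_self h', le_abs_self (-h), abs_neg h]
    · linarith [le_abs_self h']
  · push_neg at h1 h2 h3
    have hh'neg : h' < 0 := by
      by_contra hc
      push_neg at hc
      rw [abs_of_nonneg hc] at h1 h3
      rcases abs_cases h with ⟨he, _⟩ | ⟨he, _⟩ <;> linarith
    have habs : |h| < |h'| := abs_lt.mpr ⟨by linarith, h1⟩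
    have habs' : |h| ≤ -h' := by
      rw [abs_of_neg hh'neg] at habs; exact habs.le
    refine ⟨-h', -h, fun s => rfl, by rw [abs_neg]; exact habs', ?_, ?_, ?_⟩
    · linarith [neg_abs_le h']
    · linarith [le_abs_self h]
    · linarith [le_abs_self h, habs]
lemma Qcore_integrableOn (a b T : ℝ) (hba : |b| ≤ a) :
    IntegrableOn (fun s => Qcore s a b) (Ioc (0:ℝ) T) := by
  apply Measure.integrableOn_of_bounded (M := 6 / Real.pi ^ 2) measure_Ioc_lt_top.ne
    (Qcore_measurable a b).aestronglyMeasurable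
  filter_upwards with s
  rw [Real.norm_eq_abs, abs_of_nonneg (Qcore_nonneg hba)]
  exact Qcore_le hba
lemma log_ratio_le {a b : ℝ} (hba : |b| ≤ a) (ha : a ≤ 1) (hb : 0 < 1 + b) :
    Real.log ((1 + a) / (1 + b)) / (a - b) ≤ 2 + Real.log (2 / (1 + b)) := by
  have h0b : 0 ≤ a := le_trans (abs_nonneg b) hba
  have hb2 : 1 + b ≤ 2 := by linarith [le_abs_self b, hba]
  have hlog2 : 0 ≤ Real.log (2 / (1 + b)) :=
    Real.log_nonneg (by rw [le_div_iff₀ hb]; linarith)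
  rcases eq_or_lt_of_le ((abs_le.mp hba).2) with heq | hlt
  · rw [← heq]
    simp [sub_self]
    linarith
  · have hab : 0 < a - b := by linarith
    rcases le_or_gt (-(1/2) : ℝ) b with hbc | hbc
    · have hX : Real.log ((1 + a) / (1 + b)) ≤ (a - b) / (1 + b) := by
        have h1 : Real.log ((1 + a) / (1 + b)) ≤ (1 + a) / (1 + b) - 1 :=
          Real.log_le_sub_one_of_pos (by positivity)
        have h2 : (1 + a) / (1 + b) - 1 = (a - b) / (1 + b) := by
          field_simp
          ring
        linarith [h2 ▸ h1]
      rw [div_le_iff₀ hab]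
      have : (a - b) / (1 + b) ≤ 2 * (a - b) := by
        rw [div_le_iff₀ hb]
        nlinarith
      nlinarith
    · have h1ab : 1 ≤ a - b := by
        have : -b ≤ a := by linarith [(abs_le.mp hba).1]
        linarith
      have hX1 : (1:ℝ) ≤ (1 + a) / (1 + b) := by
        rw [le_div_iff₀ hb]; linarith
      have hXle : Real.log ((1 + a) / (1 + b)) ≤ Real.log (2 / (1 + b)) := by
        apply Real.log_le_log (by positivity)
        gcongr
        linarith
      calc Real.log ((1 + a) / (1 + b)) / (a - b) ≤ Real.log ((1 + a) / (1 + b)) :=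
            div_le_self (Real.log_nonneg hX1) h1ab
        _ ≤ Real.log (2 / (1 + b)) := hXle
        _ ≤ 2 + Real.log (2 / (1 + b)) := by linarith
lemma Qcore_integral {a b T : ℝ} (hba : |b| ≤ a) (ha : a ≤ 1) (hb : 0 < 1 + b) :
    ∫ s in Ioc (0:ℝ) T, Qcore s a b ≤
      6 / Real.pi ^ 2 * (3 + Real.log (2 / (1 + b))) := by
  have h0b : 0 ≤ a := le_trans (abs_nonneg b) hba
  have hua : (0:ℝ) < 1 + a := by linarith
  have hab : b ≤ a := (abs_le.mp hba).2
  set u := 1 / (1 + a) with hu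
  set v := 1 / (1 + b) with hv
  have hu0 : 0 < u := by positivity
  have huv : u ≤ v := by
    apply one_div_le_one_div_of_le hb
    linarith
  have hu1 : u ≤ 1 := by
    rw [hu, div_le_one hua]; linarith
  -- the majorant
  set g : ℝ → ℝ := fun s =>
    (Ioc (0:ℝ) 1).indicator (fun _ => 6 / Real.pi ^ 2) s +
    (Ioc u v).indicator (fun s => 6 / Real.pi ^ 2 * ((a - b)⁻¹ * s⁻¹)) s with hg
  have hinv : IntegrableOn (fun s : ℝ => s⁻¹) (Ioc u v) := by
    rw [← intervalIntegrable_iff_integrableOn_Ioc_of_le huv]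
    refine intervalIntegral.intervalIntegrable_inv ?_ continuousOn_id
    intro x hx
    rw [uIcc_of_le huv] at hx
    exact ne_of_gt (lt_of_lt_of_le hu0 hx.1)
  have hint2 : IntegrableOn (fun s : ℝ => 6 / Real.pi ^ 2 * ((a - b)⁻¹ * s⁻¹)) (Ioc u v) :=
    (hinv.const_mul _).const_mul _
  have hgi : Integrable g := by
    apply Integrable.add
    · exact (integrableOn_const measure_Ioc_lt_top.ne).integrable_indicator
        measurableSet_Ioc
    · exact hint2.integrable_indicator measurableSet_Ioc
  have hg0 : ∀ s, 0 ≤ g s := by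
    intro s
    apply add_nonneg
    · apply Set.indicator_nonneg; intro x _; positivity
    · apply Set.indicator_nonneg
      intro x hx
      have hx0 : 0 < x := lt_of_lt_of_le hu0 hx.1.le
      have hab0 : 0 ≤ a - b := by linarith
      exact mul_nonneg (by positivity)
        (mul_nonneg (inv_nonneg.mpr hab0) (inv_nonneg.mpr hx0.le))
  have hmono : ∀ s ∈ Ioc (0:ℝ) T, Qcore s a b ≤ g s := by
    intro s hs
    unfold Qcore
    split_ifs with h1 h2
    · have hs1 : s ∈ Ioc (0:ℝ) 1 := ⟨hs.1, le_trans h1.2 hu1⟩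
      rw [hg]
      simp only
      rw [Set.indicator_of_mem hs1]
      have := Set.indicator_nonneg (s := Ioc u v)
        (f := fun s : ℝ => 6 / Real.pi ^ 2 * ((a - b)⁻¹ * s⁻¹)) ?_ s
      · linarith
      · intro x hx
        have hx0 : 0 < x := lt_of_lt_of_le hu0 hx.1.le
        have hab0 : 0 ≤ a - b := by linarith
        exact mul_nonneg (by positivity)
          (mul_nonneg (inv_nonneg.mpr hab0) (inv_nonneg.mpr hx0.le))
    · obtain ⟨hs0, hb1, h3, h4, habs⟩ := mid_facts hba h2
      have hsIoc : s ∈ Ioc u v := ⟨h2.1, h2.2⟩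
      rw [hg]
      simp only
      rw [Set.indicator_of_mem hsIoc]
      have hfirst := Set.indicator_nonneg (s := Ioc (0:ℝ) 1)
        (f := fun _ : ℝ => 6 / Real.pi ^ 2) (by intro x _; positivity) s
      have hkey : (1 / s - (1 + b)) / (a - b) ≤ (a - b)⁻¹ * s⁻¹ := by
        rw [div_eq_mul_inv, mul_comm]
        apply mul_le_mul_of_nonneg_left _ (inv_nonneg.mpr (by linarith : (0:ℝ) ≤ a - b))
        rw [one_div]
        linarith [inv_nonneg.mpr hs0.le]
      nlinarith [mul_le_mul_of_nonneg_left hkey (show (0:ℝ) ≤ 6 / Real.pi ^ 2 by positivity)]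
    · linarith [hg0 s]
  have step1 : ∫ s in Ioc (0:ℝ) T, Qcore s a b ≤ ∫ s in Ioc (0:ℝ) T, g s :=
    setIntegral_mono_on (Qcore_integrableOn a b T hba) hgi.integrableOn
      measurableSet_Ioc hmono
  have step2 : ∫ s in Ioc (0:ℝ) T, g s ≤ ∫ s, g s :=
    setIntegral_le_integral hgi (Filter.Eventually.of_forall hg0)
  have hvol : ∫ s, g s =
      6 / Real.pi ^ 2 + ∫ s in Ioc u v, 6 / Real.pi ^ 2 * ((a - b)⁻¹ * s⁻¹) := by
    rw [hg]
    rw [integral_add ((integrableOn_const measure_Ioc_lt_top.ne).integrable_indicator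
        measurableSet_Ioc)
      (hint2.integrable_indicator measurableSet_Ioc)]
    congr 1
    · rw [integral_indicator measurableSet_Ioc, setIntegral_const]
      simp [Real.volume_Ioc]
    · rw [integral_indicator measurableSet_Ioc]
  have hlogint : ∫ s in Ioc u v, 6 / Real.pi ^ 2 * ((a - b)⁻¹ * s⁻¹) =
      6 / Real.pi ^ 2 * ((a - b)⁻¹ * Real.log (v / u)) := by
    rw [← intervalIntegral.integral_of_le huv]
    rw [intervalIntegral.integral_const_mul, intervalIntegral.integral_const_mul]
    rw [integral_inv]
    rw [uIcc_of_le huv]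
    intro hx
    exact absurd hx.1 (not_le.mpr hu0)
  have hvu : v / u = (1 + a) / (1 + b) := by
    rw [hu, hv]
    field_simp
  have final : (a - b)⁻¹ * Real.log ((1 + a) / (1 + b)) ≤ 2 + Real.log (2 / (1 + b)) := by
    rw [mul_comm, ← div_eq_mul_inv]
    exact log_ratio_le hba ha hb
  calc ∫ s in Ioc (0:ℝ) T, Qcore s a b ≤ ∫ s, g s := le_trans step1 step2
    _ = 6 / Real.pi ^ 2 + 6 / Real.pi ^ 2 * ((a - b)⁻¹ * Real.log ((1 + a) / (1 + b))) := by
        rw [hvol, hlogint, hvu]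
    _ ≤ 6 / Real.pi ^ 2 + 6 / Real.pi ^ 2 * (2 + Real.log (2 / (1 + b))) := by
        have := mul_le_mul_of_nonneg_left final
          (show (0:ℝ) ≤ 6 / Real.pi ^ 2 by positivity)
        linarith
    _ = 6 / Real.pi ^ 2 * (3 + Real.log (2 / (1 + b))) := by ring
lemma Qker_meas (h h' : ℝ) : Measurable fun s => Qker s h h' := by
  unfold Qker
  split_ifs <;> exact Qcore_measurable _ _
lemma Qker_nonneg {s h h' : ℝ} (hh : |h| ≤ 1) (hh' : |h'| ≤ 1) : 0 ≤ Qker s h h' := by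
  obtain ⟨a, b, heq, hba, _⟩ := Qker_repr h h' hh hh'
  rw [heq s]; exact Qcore_nonneg hba
lemma Qker_le {s h h' : ℝ} (hh : |h| ≤ 1) (hh' : |h'| ≤ 1) :
    Qker s h h' ≤ 6 / Real.pi ^ 2 := by
  obtain ⟨a, b, heq, hba, _⟩ := Qker_repr h h' hh hh'
  rw [heq s]; exact Qcore_le hba
lemma Qker_decay {s h h' : ℝ} (hh : |h| ≤ 1) (hh' : |h'| ≤ 1) (hs : 0 ≤ s) :
    Qker s h h' ≤ (18 / Real.pi ^ 2) / (s + 1) := by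
  obtain ⟨a, b, heq, hba, ha, _⟩ := Qker_repr h h' hh hh'
  rw [heq s]; exact Qcore_decay hba ha hs
lemma Qker_integral₂ {h₁ h₂ T : ℝ} (hh₁ : |h₁| ≤ 1) (hh₂ : |h₂| < 1) :
    ∫ s in Ioc (0:ℝ) T, Qker s h₁ h₂ ≤
      6 / Real.pi ^ 2 * (3 + Real.log (2 / (1 - |h₂|))) := by
  obtain ⟨a, b, heq, hba, ha, hb1, hb2⟩ := Qker_repr h₁ h₂ hh₁ hh₂.le
  have hu0 : 0 < 1 - |h₂| := by linarith
  have hb0 : 0 < 1 + b := lt_of_lt_of_le hu0 hb2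
  have h1 : ∫ s in Ioc (0:ℝ) T, Qker s h₁ h₂ = ∫ s in Ioc (0:ℝ) T, Qcore s a b := by
    apply setIntegral_congr_fun measurableSet_Ioc
    intro s _; exact heq s
  rw [h1]
  refine le_trans (Qcore_integral hba ha hb0) ?_
  have : Real.log (2 / (1 + b)) ≤ Real.log (2 / (1 - |h₂|)) := by
    apply Real.log_le_log (by positivity)
    gcongr
  nlinarith [pi_sq_pos, mul_le_mul_of_nonneg_left this
    (show (0:ℝ) ≤ 6 / Real.pi ^ 2 by positivity)]
lemma Qker_integral₁ {h₁ h₂ T : ℝ} (hh₁ : |h₁| < 1) (hh₂ : |h₂| ≤ 1) :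
    ∫ s in Ioc (0:ℝ) T, Qker s h₁ h₂ ≤
      6 / Real.pi ^ 2 * (3 + Real.log (2 / (1 - |h₁|))) := by
  obtain ⟨a, b, heq, hba, ha, hb1, hb2⟩ := Qker_repr h₁ h₂ hh₁.le hh₂
  have hu0 : 0 < 1 - |h₁| := by linarith
  have hb0 : 0 < 1 + b := lt_of_lt_of_le hu0 hb1
  have h1 : ∫ s in Ioc (0:ℝ) T, Qker s h₁ h₂ = ∫ s in Ioc (0:ℝ) T, Qcore s a b := by
    apply setIntegral_congr_fun measurableSet_Ioc
    intro s _; exact heq s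
  rw [h1]
  refine le_trans (Qcore_integral hba ha hb0) ?_
  have : Real.log (2 / (1 + b)) ≤ Real.log (2 / (1 - |h₁|)) := by
    apply Real.log_le_log (by positivity)
    gcongr
  nlinarith [pi_sq_pos, mul_le_mul_of_nonneg_left this
    (show (0:ℝ) ≤ 6 / Real.pi ^ 2 by positivity)]
lemma Qker_integrableOn {h h' : ℝ} (hh : |h| ≤ 1) (hh' : |h'| ≤ 1) (T : ℝ) :
    IntegrableOn (fun s => Qker s h h') (Ioc (0:ℝ) T) := by
  apply Measure.integrableOn_of_bounded (M := 6 / Real.pi ^ 2) measure_Ioc_lt_top.ne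
    (Qker_meas h h').aestronglyMeasurable
  filter_upwards with s
  rw [Real.norm_eq_abs, abs_of_nonneg (Qker_nonneg hh hh')]
  exact Qker_le hh hh'
lemma sqrt_log_bound {u : ℝ} (hu0 : 0 < u) (hu1 : u ≤ 1) :
    Real.sqrt u * (3 + Real.log (2 / u)) ≤ 6 := by
  have hsu : 0 < Real.sqrt u := Real.sqrt_pos.mpr hu0
  have hlog : Real.log (2 / u) = Real.log 2 - Real.log u := Real.log_div two_ne_zero hu0.ne'
  have hloguu : Real.log u = 2 * Real.log (Real.sqrt u) := by
    conv_lhs => rw [← Real.sq_sqrt hu0.le]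
    rw [Real.log_pow]
    push_cast; ring
  have hinv := Real.log_le_sub_one_of_pos (show 0 < (Real.sqrt u)⁻¹ by positivity)
  rw [Real.log_inv] at hinv
  have hsu1 : Real.sqrt u ≤ 1 := by
    rw [show (1:ℝ) = Real.sqrt 1 from Real.sqrt_one.symm]
    exact Real.sqrt_le_sqrt hu1
  have hlog2 : Real.log 2 ≤ 1 := by
    have := Real.log_le_sub_one_of_pos (show (0:ℝ) < 2 by norm_num); linarith
  have hmul : Real.sqrt u * (Real.sqrt u)⁻¹ = 1 := mul_inv_cancel₀ hsu.ne'
  have hlog0 : 0 ≤ Real.log 2 := Real.log_nonneg (by norm_num)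
  rw [hlog, hloguu]
  nlinarith [mul_le_mul_of_nonneg_left hinv hsu.le,
    mul_nonneg (show (0:ℝ) ≤ 1 - Real.sqrt u by linarith) hlog0]
lemma sqrt_two_le : Real.sqrt 2 ≤ 1.5 := by
  nlinarith [Real.sq_sqrt (show (0:ℝ) ≤ 2 by norm_num), Real.sqrt_nonneg 2]
lemma cos_log_bound {y : ℝ} (hcos : 0 ≤ Real.cos y) (hw : |Real.sin y| < 1) :
    Real.cos y * (3 + Real.log (2 / (1 - |Real.sin y|))) ≤ 9 := by
  set u := 1 - |Real.sin y| with hu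
  have hu0 : 0 < u := by simp only [hu]; linarith
  have hu1 : u ≤ 1 := by simp only [hu]; linarith [abs_nonneg (Real.sin y)]
  have hcossq : Real.cos y ^ 2 ≤ 2 * u := by
    rw [Real.cos_sq']
    have : Real.sin y ^ 2 = |Real.sin y| ^ 2 := (sq_abs _).symm
    nlinarith [abs_nonneg (Real.sin y), hw.le]
  have hcosle : Real.cos y ≤ Real.sqrt 2 * Real.sqrt u := by
    rw [← Real.sqrt_mul_self hcos, ← Real.sqrt_mul (by norm_num : (0:ℝ) ≤ 2)]
    exact Real.sqrt_le_sqrt (by nlinarith)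
  have hL0 : 0 ≤ 3 + Real.log (2 / u) := by
    have : (0:ℝ) ≤ Real.log (2 / u) := Real.log_nonneg (by rw [le_div_iff₀ hu0]; linarith)
    linarith
  calc Real.cos y * (3 + Real.log (2 / u)) ≤
      Real.sqrt 2 * Real.sqrt u * (3 + Real.log (2 / u)) :=
        mul_le_mul_of_nonneg_right hcosle hL0
    _ = Real.sqrt 2 * (Real.sqrt u * (3 + Real.log (2 / u))) := by ring
    _ ≤ Real.sqrt 2 * 6 := mul_le_mul_of_nonneg_left (sqrt_log_bound hu0 hu1)
        (Real.sqrt_nonneg 2)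
    _ ≤ 9 := by nlinarith [sqrt_two_le, Real.sqrt_nonneg 2]

/-- `f(θ,t,h|h') ≤ C/(t+1)`. -/
theorem stmt12 :
    ∃ C : ℝ, 0 < C ∧
      ∀ θ t h h' : ℝ, 0 ≤ t →
        h ∈ Set.Icc (-1:ℝ) 1 → h' ∈ Set.Icc (-1:ℝ) 1 →
        fker θ t h h' ≤ C / (t + 1) := by
  refine ⟨24, by norm_num, ?_⟩
  intro θ t h h' ht hh hh'
  have hh1 : |h| ≤ 1 := abs_le.mpr ⟨hh.1, hh.2⟩
  have hh'1 : |h'| ≤ 1 := abs_le.mpr ⟨hh'.1, hh'.2⟩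
  have ht1 : (0:ℝ) < t + 1 := by linarith
  have hC0 : (0:ℝ) ≤ 24 / (t + 1) := by positivity
  have hpi := Real.pi_pos
  unfold fker
  by_cases hex : ∃ ℓ : ℤ, 2 * Real.arcsin h' - 3 * Real.pi ≤ θ + 2 * (ℓ:ℝ) * Real.pi ∧
      θ + 2 * (ℓ:ℝ) * Real.pi < 2 * Real.arcsin h' - Real.pi
  swap
  · have hzero : ∀ ℓ : ℤ, dhdd (θ + 2 * (ℓ:ℝ) * Real.pi) h' *
        ∫ t' in Set.Ioc (0:ℝ) t,
          Qker (t - t') h (hdd (θ + 2 * (ℓ:ℝ) * Real.pi) h') *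
          Qker t' (hdd (θ + 2 * (ℓ:ℝ) * Real.pi) h') h' = (0:ℝ) := by
      intro ℓ
      have : dhdd (θ + 2 * (ℓ:ℝ) * Real.pi) h' = 0 := by
        unfold dhdd
        rw [if_neg]
        exact fun hcon => hex ⟨ℓ, hcon⟩
      rw [this, zero_mul]
    rw [tsum_congr hzero, tsum_zero]
    exact hC0
  obtain ⟨ℓ₀, hP0⟩ := hex
  -- all other terms vanish
  have huniq : ∀ ℓ : ℤ, ℓ ≠ ℓ₀ → dhdd (θ + 2 * (ℓ:ℝ) * Real.pi) h' *
      (∫ t' in Set.Ioc (0:ℝ) t,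
        Qker (t - t') h (hdd (θ + 2 * (ℓ:ℝ) * Real.pi) h') *
        Qker t' (hdd (θ + 2 * (ℓ:ℝ) * Real.pi) h') h') = (0:ℝ) := by
    intro ℓ hne
    have hd0 : dhdd (θ + 2 * (ℓ:ℝ) * Real.pi) h' = 0 := by
      unfold dhdd
      rw [if_neg]
      intro hcon
      have habs : (1:ℝ) ≤ |(ℓ:ℝ) - (ℓ₀:ℝ)| := by
        have h1 : (1:ℤ) ≤ |ℓ - ℓ₀| := Int.one_le_abs (sub_ne_zero.mpr hne)
        have h2 : ((1:ℤ):ℝ) ≤ ((|ℓ - ℓ₀|:ℤ):ℝ) := Int.cast_le.mpr h1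
        push_cast at h2
        exact h2
      have hlt : |(ℓ:ℝ) - (ℓ₀:ℝ)| < 1 := by
        rw [abs_lt]
        constructor
        · nlinarith [hcon.1, hP0.2]
        · nlinarith [hcon.2, hP0.1]
      linarith
    rw [hd0, zero_mul]
  rw [tsum_eq_single ℓ₀ huniq]
  -- now bound the single term
  set x := θ + 2 * (ℓ₀:ℝ) * Real.pi with hx
  set y := (x + 2 * Real.pi - 2 * Real.arcsin h') / 2 with hy
  have hdval : dhdd x h' = Real.cos y / 2 := by
    unfold dhdd; rw [if_pos hP0]
  have hhval : hdd x h' = Real.sin y := by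
    unfold hdd; rw [if_pos hP0]
  have hy1 : -(Real.pi / 2) ≤ y := by
    rw [hy]; rw [hx] at hP0 ⊢; linarith [hP0.1]
  have hy2 : y < Real.pi / 2 := by
    rw [hy]; rw [hx] at hP0 ⊢; linarith [hP0.2]
  have hcos0 : 0 ≤ Real.cos y :=
    Real.cos_nonneg_of_mem_Icc ⟨hy1, hy2.le⟩
  set w := Real.sin y with hw
  have hw1 : |w| ≤ 1 := abs_le.mpr ⟨Real.neg_one_le_sin y, Real.sin_le_one y⟩
  rw [hdval, hhval]
  rcases eq_or_lt_of_le hw1 with hweq | hwlt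
  · -- |sin y| = 1 : cos y = 0
    have hcsq : Real.cos y ^ 2 = 0 := by
      rw [Real.cos_sq', ← sq_abs, hweq]; norm_num
    have hcy : Real.cos y = 0 :=
      pow_eq_zero_iff (two_ne_zero) |>.mp hcsq
    rw [hcy]
    norm_num
    exact hC0
  · -- main case
    set u := 1 - |w| with hu
    have hu0 : 0 < u := by rw [hu]; linarith
    set Kc := (36 / Real.pi ^ 2) / (t + 1) with hKc
    have hKc0 : (0:ℝ) ≤ Kc := by positivity
    -- integrability facts
    have hmeas1 : Measurable fun t' => Qker (t - t') h w :=
      (Qker_meas h w).comp (measurable_const.sub measurable_id)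
    have hint1 : IntegrableOn (fun t' => Qker (t - t') h w) (Ioc (0:ℝ) t) := by
      apply Measure.integrableOn_of_bounded (M := 6 / Real.pi ^ 2) measure_Ioc_lt_top.ne
        hmeas1.aestronglyMeasurable
      filter_upwards with s
      rw [Real.norm_eq_abs, abs_of_nonneg (Qker_nonneg hh1 hw1)]
      exact Qker_le hh1 hw1
    have hint2 : IntegrableOn (fun t' => Qker t' w h') (Ioc (0:ℝ) t) :=
      Qker_integrableOn hw1 hh'1 t
    have hintF : IntegrableOn (fun t' => Qker (t - t') h w * Qker t' w h')
        (Ioc (0:ℝ) t) := by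
      apply Measure.integrableOn_of_bounded (M := 6 / Real.pi ^ 2 * (6 / Real.pi ^ 2))
        measure_Ioc_lt_top.ne (hmeas1.mul (Qker_meas w h')).aestronglyMeasurable
      filter_upwards with s
      simp only [Pi.mul_apply]
      rw [Real.norm_eq_abs, abs_of_nonneg (mul_nonneg (Qker_nonneg hh1 hw1)
        (Qker_nonneg hw1 hh'1))]
      exact mul_le_mul (Qker_le hh1 hw1) (Qker_le hw1 hh'1) (Qker_nonneg hw1 hh'1)
        (by positivity)
    -- pointwise bound
    have hpt : ∀ t' ∈ Ioc (0:ℝ) t, Qker (t - t') h w * Qker t' w h' ≤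
        Kc * (Qker (t - t') h w + Qker t' w h') := by
      intro t' ht'
      have hdecKc : ∀ s : ℝ, t / 2 ≤ s → 0 ≤ s → ∀ g g' : ℝ, |g| ≤ 1 → |g'| ≤ 1 →
          Qker s g g' ≤ Kc := by
        intro s hs hs0 g g' hg hg'
        calc Qker s g g' ≤ (18 / Real.pi ^ 2) / (s + 1) := Qker_decay hg hg' hs0
          _ ≤ (18 / Real.pi ^ 2) / (t / 2 + 1) := by gcongr
          _ ≤ Kc := by
              rw [hKc, div_le_div_iff₀ (by linarith : (0:ℝ) < t / 2 + 1) ht1,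
                show (36:ℝ) / Real.pi ^ 2 = 2 * (18 / Real.pi ^ 2) by ring]
              nlinarith [show (0:ℝ) ≤ 18 / Real.pi ^ 2 by positivity]
      rcases le_or_gt t' (t / 2) with hhalf | hhalf
      · have h1 : Qker (t - t') h w ≤ Kc :=
          hdecKc (t - t') (by linarith) (by linarith [ht'.2]) h w hh1 hw1
        calc Qker (t - t') h w * Qker t' w h' ≤ Kc * Qker t' w h' :=
              mul_le_mul_of_nonneg_right h1 (Qker_nonneg hw1 hh'1)
          _ ≤ Kc * (Qker (t - t') h w + Qker t' w h') := by
              apply mul_le_mul_of_nonneg_left _ hKc0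
              linarith [Qker_nonneg (s := t - t') hh1 hw1]
      · have h1 : Qker t' w h' ≤ Kc :=
          hdecKc t' hhalf.le ht'.1.le w h' hw1 hh'1
        calc Qker (t - t') h w * Qker t' w h' ≤ Qker (t - t') h w * Kc :=
              mul_le_mul_of_nonneg_left h1 (Qker_nonneg hh1 hw1)
          _ = Kc * Qker (t - t') h w := by ring
          _ ≤ Kc * (Qker (t - t') h w + Qker t' w h') := by
              apply mul_le_mul_of_nonneg_left _ hKc0
              linarith [Qker_nonneg (s := t') hw1 hh'1]
    have hIbound : (∫ t' in Ioc (0:ℝ) t, Qker (t - t') h w * Qker t' w h') ≤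
        Kc * ((∫ t' in Ioc (0:ℝ) t, Qker (t - t') h w) +
          (∫ t' in Ioc (0:ℝ) t, Qker t' w h')) := by
      calc (∫ t' in Ioc (0:ℝ) t, Qker (t - t') h w * Qker t' w h') ≤
          ∫ t' in Ioc (0:ℝ) t, Kc * (Qker (t - t') h w + Qker t' w h') :=
            setIntegral_mono_on hintF ((hint1.add hint2).const_mul Kc)
              measurableSet_Ioc hpt
        _ = Kc * ((∫ t' in Ioc (0:ℝ) t, Qker (t - t') h w) +
            (∫ t' in Ioc (0:ℝ) t, Qker t' w h')) := by
            rw [integral_const_mul, integral_add hint1 hint2]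
    -- substitution for the first integral
    have hsub : (∫ t' in Ioc (0:ℝ) t, Qker (t - t') h w) =
        ∫ s in Ioc (0:ℝ) t, Qker s h w := by
      rw [← intervalIntegral.integral_of_le ht, ← intervalIntegral.integral_of_le ht,
        intervalIntegral.integral_comp_sub_left (fun s => Qker s h w) t]
      norm_num
    have hS1 : (∫ s in Ioc (0:ℝ) t, Qker s h w) ≤
        6 / Real.pi ^ 2 * (3 + Real.log (2 / u)) := Qker_integral₂ hh1 hwlt
    have hS2 : (∫ t' in Ioc (0:ℝ) t, Qker t' w h') ≤
        6 / Real.pi ^ 2 * (3 + Real.log (2 / u)) := Qker_integral₁ hwlt hh'1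
    have hsum : (∫ t' in Ioc (0:ℝ) t, Qker (t - t') h w) +
        (∫ t' in Ioc (0:ℝ) t, Qker t' w h') ≤
        2 * (6 / Real.pi ^ 2 * (3 + Real.log (2 / u))) := by
      rw [hsub]; linarith
    have hI2 : (∫ t' in Ioc (0:ℝ) t, Qker (t - t') h w * Qker t' w h') ≤
        Kc * (2 * (6 / Real.pi ^ 2 * (3 + Real.log (2 / u)))) :=
      le_trans hIbound (mul_le_mul_of_nonneg_left hsum hKc0)
    have hclb : Real.cos y * (3 + Real.log (2 / u)) ≤ 9 := cos_log_bound hcos0 hwlt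
    calc Real.cos y / 2 * ∫ t' in Ioc (0:ℝ) t, Qker (t - t') h w * Qker t' w h' ≤
        Real.cos y / 2 * (Kc * (2 * (6 / Real.pi ^ 2 * (3 + Real.log (2 / u))))) :=
          mul_le_mul_of_nonneg_left hI2 (by positivity)
      _ = Real.cos y * (3 + Real.log (2 / u)) * (36 / Real.pi ^ 2 * (6 / Real.pi ^ 2)) /
          (t + 1) := by rw [hKc]; ring
      _ ≤ 9 * (36 / Real.pi ^ 2 * (6 / Real.pi ^ 2)) / (t + 1) := by
          gcongr
      _ ≤ 24 / (t + 1) := by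
          gcongr
          have hsimp : 9 * (36 / Real.pi ^ 2 * (6 / Real.pi ^ 2)) =
              1944 / (Real.pi ^ 2 * Real.pi ^ 2) := by ring
          rw [hsimp, div_le_iff₀ (by positivity)]
          nlinarith [pi_sq_gt]
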